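/- For every integer N, there exists a finite connected simple graph G with metric dimension exactly 2 and edge metric dimension at least N. Consequently, there is no function f such that edim(G) ≤ f(dim(G)) for all finite connected graphs G. -/

import Mathlib

/-!
The witnesses are triangle strips: a path with a triangle on each edge. A vertex is determined by
its distances to the two ends of the path, while no single landmark separates the four neighbours
of an inner path vertex, so the metric dimension is `2`. The neighbours of an apex lie in the
closed neighbourhood of either end of its edge, so the two edges from an inner path vertex to its
neighbouring apexes are separated only by a landmark at one of these apexes; disjoint such pairs
force many landmarks.
-/

open SimpleGraph

/-- `S` is a resolving set for `G`: any two distinct vertices are distinguished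
by their graph distance to some landmark in `S`. -/
def IsResolvingSet {V : Type*} (G : SimpleGraph V) (S : Set V) : Prop :=
  ∀ u v : V, u ≠ v → ∃ w ∈ S, G.dist u w ≠ G.dist v w

/-- The metric dimension of `G`: the least size of a (finite) resolving set. -/
noncomputable def metricDim {V : Type*} (G : SimpleGraph V) : ℕ :=
  sInf {k | ∃ S : Finset V, IsResolvingSet G ↑S ∧ S.card = k}

/-- Distance from an edge `e = {u,v}` to a vertex `w`: `min (d(u,w)) (d(v,w))`. -/
noncomputable def edgeDist {V : Type*} (G : SimpleGraph V) (e : Sym2 V) (w : V) : ℕ :=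
  Sym2.lift ⟨fun u v => min (G.dist u w) (G.dist v w), fun u v => by simp [min_comm]⟩ e

/-- `S` is an edge resolving set for `G`: any two distinct edges are distinguished
by their distance to some landmark in `S`. -/
def IsEdgeResolvingSet {V : Type*} (G : SimpleGraph V) (S : Set V) : Prop :=
  ∀ e ∈ G.edgeSet, ∀ f ∈ G.edgeSet, e ≠ f → ∃ w ∈ S, edgeDist G e w ≠ edgeDist G f w

/-- The edge metric dimension of `G`: the least size of a (finite) edge resolving set. -/
noncomputable def edgeMetricDim {V : Type*} (G : SimpleGraph V) : ℕ :=
  sInf {k | ∃ S : Finset V, IsEdgeResolvingSet G ↑S ∧ S.card = k}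

/-- `G` contains `H` as a subgraph: there is an injective graph homomorphism `H → G`. -/
def Contains {V W : Type*} (G : SimpleGraph V) (H : SimpleGraph W) : Prop :=
  ∃ f : H →g G, Function.Injective f

/-- The graph `D_k` on `ℤ_{≥0}^k`: distinct points are adjacent iff they differ
by at most 1 in every coordinate. -/
def Dgraph (k : ℕ) : SimpleGraph (Fin k → ℕ) where
  Adj x y := x ≠ y ∧ ∀ i, x i ≤ y i + 1 ∧ y i ≤ x i + 1
  symm := ⟨fun _x _y h => ⟨h.1.symm, fun i => ⟨(h.2 i).2, (h.2 i).1⟩⟩⟩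
  loopless := ⟨fun _x h => h.1 rfl⟩

namespace SimpleGraph

variable {V : Type*} {G : SimpleGraph V}

section Layering

variable {f : V → ℕ}

lemma le_add_length_of_adj_le (hf : ∀ u v, G.Adj u v → f v ≤ f u + 1) {u v : V}
    (p : G.Walk u v) : f v ≤ f u + p.length := by
  induction p with
  | nil => simp
  | cons h _ ih => have := hf _ _ h; rw [Walk.length_cons]; omega

lemma exists_walk_length_eq_of_exists_pred {w : V} (hw : f w = 0)
    (hpred : ∀ v, v ≠ w → ∃ u, G.Adj u v ∧ f u + 1 = f v) (v : V) :
    ∃ p : G.Walk w v, p.length = f v := by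
  induction hk : f v generalizing v with
  | zero =>
    obtain rfl : v = w := by
      by_contra hne
      obtain ⟨u, -, hu⟩ := hpred v hne
      omega
    exact ⟨.nil, rfl⟩
  | succ k ih =>
    obtain ⟨u, hadj, hu⟩ := hpred v (by rintro rfl; omega)
    obtain ⟨p, hp⟩ := ih u (by omega)
    exact ⟨p.concat hadj, by rw [Walk.length_concat, hp]⟩

lemma dist_eq_of_exists_pred {w : V} (hw : f w = 0) (hf : ∀ u v, G.Adj u v → f v ≤ f u + 1)
    (hpred : ∀ v, v ≠ w → ∃ u, G.Adj u v ∧ f u + 1 = f v) (v : V) : G.dist w v = f v := by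
  obtain ⟨p, hp⟩ := exists_walk_length_eq_of_exists_pred hw hpred v
  obtain ⟨q, hq⟩ := p.reachable.exists_walk_length_eq_dist
  have := le_add_length_of_adj_le hf q
  have := dist_le p
  omega

end Layering

/-- Neighbours of a vertex have distances to `w` within one of each other, so at most three
values occur among them and one landmark cannot tell four neighbours apart. -/
lemma two_le_card_of_isResolvingSet {v : V} {s : Finset V} (hs : ∀ u ∈ s, G.Adj v u)
    (hs4 : 4 ≤ s.card) {S : Finset V} (hS : IsResolvingSet G S) : 2 ≤ S.card := by
  by_contra! hS1
  have : Nonempty V := ⟨v⟩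
  obtain ⟨w, hw⟩ := Finset.card_le_one_iff_subset_singleton.mp (Nat.le_of_lt_succ hS1)
  have hinj : Set.InjOn (G.dist w) s := by
    intro u _ u' _ huu'
    by_contra hne
    obtain ⟨w', hw', hd⟩ := hS u u' hne
    obtain rfl : w' = w := Finset.mem_singleton.mp (hw hw')
    exact hd (by rwa [dist_comm, @dist_comm _ _ u'])
  have hmaps : Set.MapsTo (G.dist w) s (Finset.Icc (G.dist w v - 1) (G.dist w v + 1)) := by
    intro u hu
    have := (hs u hu).diff_dist_adj (u := w)
    simp only [Finset.coe_Icc, Set.mem_Icc]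
    omega
  have := Finset.card_le_card_of_injOn _ hmaps hinj
  rw [Nat.card_Icc] at this
  omega

lemma dist_le_dist_of_forall_adj (hG : G.Connected) {x u w : V}
    (hx : ∀ s, G.Adj x s → s = u ∨ G.Adj u s) (hw : w ≠ x) : G.dist u w ≤ G.dist x w := by
  obtain ⟨p, hp⟩ := hG.exists_walk_length_eq_dist x w
  cases p with
  | nil => exact absurd rfl hw
  | @cons _ s _ h q =>
    rw [← hp, Walk.length_cons]
    have hq := dist_le q
    rcases hx s h with rfl | hus
    · omega
    · have := hG.dist_triangle (u := u) (w := w) (v := s)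
      rw [dist_eq_one_iff_adj.mpr hus] at this
      omega

lemma mem_or_mem_of_isEdgeResolvingSet (hG : G.Connected) {S : Set V}
    (hS : IsEdgeResolvingSet G S) {u x y : V} (hxy : x ≠ y) (hux : G.Adj u x) (huy : G.Adj u y)
    (hx : ∀ s, G.Adj x s → s = u ∨ G.Adj u s) (hy : ∀ s, G.Adj y s → s = u ∨ G.Adj u s) :
    x ∈ S ∨ y ∈ S := by
  have hne : s(u, x) ≠ s(u, y) := by rwa [Ne, Sym2.congr_right]
  obtain ⟨w, hwS, hd⟩ := hS _ hux _ huy hne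
  by_contra! hxyS
  have dx := dist_le_dist_of_forall_adj hG hx (fun h => hxyS.1 (h ▸ hwS))
  have dy := dist_le_dist_of_forall_adj hG hy (fun h => hxyS.2 (h ▸ hwS))
  exact hd (by simp only [edgeDist, Sym2.lift_mk]; omega)

lemma edgeDist_eq_zero_iff (hG : G.Connected) {e : Sym2 V} {w : V} :
    edgeDist G e w = 0 ↔ w ∈ e := by
  induction e using Sym2.ind with | _ a b =>
  simp only [edgeDist, Sym2.lift_mk, Sym2.mem_iff, Nat.min_eq_zero_iff, hG.dist_eq_zero_iff,
    @eq_comm _ w]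

/-- An edge is recognised by the landmarks at distance `0` from it, namely its endpoints. -/
lemma isEdgeResolvingSet_univ (hG : G.Connected) : IsEdgeResolvingSet G Set.univ := by
  intro e _ f _ hef
  by_contra! h
  exact hef (Sym2.ext fun w => by
    rw [← edgeDist_eq_zero_iff hG, h w trivial, edgeDist_eq_zero_iff hG])

end SimpleGraph

section Dimensions

variable {V : Type*} {G : SimpleGraph V}

lemma metricDim_le_card {S : Finset V} (hS : IsResolvingSet G S) : metricDim G ≤ S.card :=
  Nat.sInf_le ⟨S, hS, rfl⟩

lemma le_metricDim {m : ℕ} {S₀ : Finset V} (hS₀ : IsResolvingSet G S₀)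
    (h : ∀ S : Finset V, IsResolvingSet G S → m ≤ S.card) : m ≤ metricDim G :=
  le_csInf ⟨_, S₀, hS₀, rfl⟩ (by rintro _ ⟨S, hS, rfl⟩; exact h S hS)

lemma le_edgeMetricDim [Fintype V] (hG : G.Connected) {m : ℕ}
    (h : ∀ S : Finset V, IsEdgeResolvingSet G S → m ≤ S.card) : m ≤ edgeMetricDim G :=
  le_csInf ⟨_, Finset.univ, by simpa using isEdgeResolvingSet_univ hG, rfl⟩
    (by rintro _ ⟨S, hS, rfl⟩; exact h S hS)

end Dimensions

/-- The even vertices `0, 2, …, 2M` form a path, and the odd vertex `2k + 1` is the apex of a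
triangle on its edge `{2k, 2k + 2}`. -/
def triangleStrip (M : ℕ) : SimpleGraph (Fin (2 * M + 1)) :=
  SimpleGraph.fromRel fun a b => (b : ℕ) = a + 1 ∨ ((a : ℕ) % 2 = 0 ∧ (b : ℕ) = a + 2)

namespace triangleStrip

variable {M : ℕ}

lemma adj_iff {a b : Fin (2 * M + 1)} :
    (triangleStrip M).Adj a b ↔ (a : ℕ) + 1 = b ∨ (b : ℕ) + 1 = a ∨
      ((a : ℕ) % 2 = 0 ∧ (a : ℕ) + 2 = b) ∨ ((b : ℕ) % 2 = 0 ∧ (b : ℕ) + 2 = a) := by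
  simp only [triangleStrip, fromRel_adj, ne_eq, Fin.ext_iff]
  omega

lemma exists_adj_ceil_half_succ (v : Fin (2 * M + 1)) (hv : v ≠ 0) :
    ∃ u, (triangleStrip M).Adj u v ∧ ((u : ℕ) + 1) / 2 + 1 = ((v : ℕ) + 1) / 2 := by
  replace hv : (v : ℕ) ≠ 0 := by rwa [Ne, Fin.ext_iff, Fin.val_zero] at hv
  refine ⟨⟨if (v : ℕ) % 2 = 0 then v - 2 else v - 1, by split_ifs <;> omega⟩, ?_, ?_⟩ <;>
    split_ifs <;> simp only [adj_iff] <;> omega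

lemma dist_zero (a : Fin (2 * M + 1)) : (triangleStrip M).dist 0 a = ((a : ℕ) + 1) / 2 :=
  dist_eq_of_exists_pred (f := fun a : Fin (2 * M + 1) => ((a : ℕ) + 1) / 2) (by simp)
    (fun u v h => by simp only [adj_iff] at h; omega) exists_adj_ceil_half_succ a

lemma dist_last (a : Fin (2 * M + 1)) :
    (triangleStrip M).dist (Fin.last _) a = (2 * M - (a : ℕ) + 1) / 2 := by
  refine dist_eq_of_exists_pred (f := fun a : Fin (2 * M + 1) => (2 * M - (a : ℕ) + 1) / 2)
    (by simp) (fun u v h => by simp only [adj_iff] at h; omega) (fun v hv => ?_) a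
  replace hv : (v : ℕ) ≠ 2 * M := by rwa [Ne, Fin.ext_iff, Fin.val_last] at hv
  refine ⟨⟨if (v : ℕ) % 2 = 0 then v + 2 else v + 1, by split_ifs <;> omega⟩, ?_, ?_⟩ <;>
    split_ifs <;> simp only [adj_iff, and_true, true_or, or_true] <;> omega

lemma connected : (triangleStrip M).Connected := by
  refine (connected_iff_exists_forall_reachable _).mpr ⟨0, fun v => ?_⟩
  obtain ⟨p, -⟩ := exists_walk_length_eq_of_exists_pred
    (f := fun a : Fin (2 * M + 1) => ((a : ℕ) + 1) / 2) (by simp) exists_adj_ceil_half_succ v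
  exact p.reachable

lemma isResolvingSet_ends :
    IsResolvingSet (triangleStrip M) ↑({0, Fin.last _} : Finset (Fin (2 * M + 1))) := by
  intro u v huv
  by_contra! h
  simp only [Finset.coe_insert, Finset.coe_singleton, Set.mem_insert_iff,
    Set.mem_singleton_iff, forall_eq_or_imp, forall_eq] at h
  rw [dist_comm, dist_zero, dist_comm, dist_zero, dist_comm, dist_last, dist_comm,
    dist_last] at h
  exact huv (Fin.ext (by omega))

lemma metricDim_eq_two (hM : 2 ≤ M) : metricDim (triangleStrip M) = 2 := by
  refine le_antisymm ((metricDim_le_card isResolvingSet_ends).trans Finset.card_le_two)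
    (le_metricDim isResolvingSet_ends fun S hS => ?_)
  refine two_le_card_of_isResolvingSet (v := ⟨2, by omega⟩)
    (s := {⟨0, by omega⟩, ⟨1, by omega⟩, ⟨3, by omega⟩, ⟨4, by omega⟩}) ?_ ?_ hS
  · simp [adj_iff]
  · rw [Finset.card_insert_of_notMem, Finset.card_insert_of_notMem, Finset.card_pair] <;>
      simp [Fin.ext_iff]

lemma eq_or_adj_of_adj_of_odd {x u s : Fin (2 * M + 1)} (hx : (x : ℕ) % 2 = 1)
    (hux : (triangleStrip M).Adj u x) (hxs : (triangleStrip M).Adj x s) :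
    s = u ∨ (triangleStrip M).Adj u s := by
  rw [adj_iff] at hux hxs ⊢
  rw [Fin.ext_iff]
  omega

/-- The hub `2k + 2` is at least as close as the apexes `2k + 1` and `2k + 3` to every other
vertex, so only a landmark at one of these apexes separates their edges to the hub. -/
lemma exists_apex_mem_of_isEdgeResolvingSet {S : Set (Fin (2 * M + 1))}
    (hS : IsEdgeResolvingSet (triangleStrip M) S) {k : ℕ} (hk : k + 1 < M) :
    ∃ w ∈ S, (w : ℕ) = 2 * k + 1 ∨ (w : ℕ) = 2 * k + 3 := by
  let hub : Fin (2 * M + 1) := ⟨2 * k + 2, by omega⟩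
  let x : Fin (2 * M + 1) := ⟨2 * k + 1, by omega⟩
  let y : Fin (2 * M + 1) := ⟨2 * k + 3, by omega⟩
  have hx : (triangleStrip M).Adj hub x := by simp [adj_iff, hub, x]
  have hy : (triangleStrip M).Adj hub y := by simp [adj_iff, hub, y]
  rcases mem_or_mem_of_isEdgeResolvingSet connected hS (by simp [x, y, Fin.ext_iff]) hx hy
    (fun _ => eq_or_adj_of_adj_of_odd (show (2 * k + 1) % 2 = 1 by omega) hx)
    (fun _ => eq_or_adj_of_adj_of_odd (show (2 * k + 3) % 2 = 1 by omega) hy) with h | h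
  · exact ⟨x, h, .inl rfl⟩
  · exact ⟨y, h, .inr rfl⟩

lemma le_edgeMetricDim (n : ℕ) : n ≤ edgeMetricDim (triangleStrip (2 * n)) := by
  refine _root_.le_edgeMetricDim connected fun S hS => ?_
  have hit (i : Fin n) : ∃ w ∈ S, (w : ℕ) / 4 = i := by
    obtain ⟨w, hwS, hw⟩ := exists_apex_mem_of_isEdgeResolvingSet hS (k := 2 * i) (by omega)
    exact ⟨w, hwS, by omega⟩
  choose g hgS hg using hit
  simpa using Finset.card_le_card_of_injOn g (s := Finset.univ) (fun i _ => hgS i)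
    (fun i _ j _ hij => Fin.ext (by rw [← hg i, ← hg j, hij]))

end triangleStrip

/-- for every `N` there is a finite connected graph with metric
dimension exactly 2 and edge metric dimension at least `N`; consequently no function
`f` satisfies `edim(G) ≤ f(dim G)` for all finite connected graphs `G`. -/
theorem statement17 :
    (∀ N : ℕ, ∃ (V : Type) (_ : Fintype V) (G : SimpleGraph V), G.Connected ∧
      metricDim G = 2 ∧ N ≤ edgeMetricDim G) ∧
    ¬ ∃ f : ℕ → ℕ, ∀ (V : Type) [Fintype V], ∀ G : SimpleGraph V, G.Connected →
      edgeMetricDim G ≤ f (metricDim G) := by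
  have strips : ∀ N : ℕ, ∃ (V : Type) (_ : Fintype V) (G : SimpleGraph V), G.Connected ∧
      metricDim G = 2 ∧ N ≤ edgeMetricDim G := fun N =>
    ⟨_, inferInstance, triangleStrip (2 * (N + 1)), triangleStrip.connected,
      triangleStrip.metricDim_eq_two (by omega),
      (Nat.le_succ N).trans (triangleStrip.le_edgeMetricDim _)⟩
  refine ⟨strips, fun ⟨f, hf⟩ => ?_⟩
  obtain ⟨V, _, G, hG, hdim, hedim⟩ := strips (f 2 + 1)
  have := hf V G hG
  rw [hdim] at this
  omega
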